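/- If A is an n×n real matrix whose symmetric part (A+Aᵀ)/2 is positive semidefinite, then the adjugate adj(A) also has positive semidefinite symmetric part. -/

import Mathlib

/-!
A matrix whose quadratic form is positive definite has positive determinant: along the segment
from `1` to `A` the quadratic form stays positive definite, so the determinant never vanishes and
keeps the sign it has at `1`. For such `A`, `adj A = det A • A⁻¹`, and substituting `x = A y`
gives `xᵀ adj(A) x = det A · yᵀ Aᵀ y > 0`. An accretive `A` is the limit of the matrices
`A + ε • 1` with positive definite quadratic form, and the adjugate is continuous.
-/

open Matrix Filter Topology

namespace Matrix

variable {ι : Type*} [Fintype ι]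

theorem dotProduct_transpose_mulVec_self (A : Matrix ι ι ℝ) (x : ι → ℝ) :
    x ⬝ᵥ (Aᵀ *ᵥ x) = x ⬝ᵥ (A *ᵥ x) := by
  rw [dotProduct_mulVec, vecMul_transpose, dotProduct_comm]

theorem dotProduct_half_add_transpose_mulVec (A : Matrix ι ι ℝ) (x : ι → ℝ) :
    x ⬝ᵥ (((1 / 2 : ℝ) • (A + Aᵀ)) *ᵥ x) = x ⬝ᵥ (A *ᵥ x) := by
  rw [smul_mulVec, add_mulVec, dotProduct_smul, dotProduct_add,
    dotProduct_transpose_mulVec_self, smul_eq_mul]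
  ring

theorem posSemidef_half_add_transpose_iff {A : Matrix ι ι ℝ} :
    ((1 / 2 : ℝ) • (A + Aᵀ)).PosSemidef ↔ ∀ x, 0 ≤ x ⬝ᵥ (A *ᵥ x) := by
  have hsymm : ((1 / 2 : ℝ) • (A + Aᵀ)).IsHermitian :=
    ((isSymm_add_transpose_self A).smul (1 / 2 : ℝ)).eq
  simp only [posSemidef_iff_dotProduct_mulVec, star_trivial,
    dotProduct_half_add_transpose_mulVec, hsymm, true_and]

variable [DecidableEq ι]

theorem det_pos_of_forall_dotProduct_mulVec_pos {A : Matrix ι ι ℝ}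
    (hA : ∀ x ≠ 0, 0 < x ⬝ᵥ (A *ᵥ x)) : 0 < A.det := by
  let path : ℝ → Matrix ι ι ℝ := fun t => (1 - t) • 1 + t • A
  have hpath_pos : ∀ t ∈ Set.Icc (0 : ℝ) 1, ∀ x ≠ 0, 0 < x ⬝ᵥ (path t *ᵥ x) := by
    intro t ⟨ht0, ht1⟩ x hx
    have hxx : 0 < x ⬝ᵥ x := by simpa using dotProduct_self_star_pos_iff.2 hx
    have hexpand : x ⬝ᵥ (path t *ᵥ x) = (1 - t) * (x ⬝ᵥ x) + t * (x ⬝ᵥ (A *ᵥ x)) := by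
      simp [path, add_mulVec, smul_mulVec, dotProduct_add, dotProduct_smul]
    rw [hexpand]
    rcases ht0.eq_or_lt with rfl | ht0
    · simpa using hxx
    · nlinarith [hA x hx]
  have hpath_det : ∀ t ∈ Set.Icc (0 : ℝ) 1, (path t).det ≠ 0 := by
    intro t ht hdet
    obtain ⟨v, hv, hAv⟩ := exists_mulVec_eq_zero_iff.2 hdet
    simpa [hAv] using hpath_pos t ht v hv
  have hcont : ContinuousOn (fun t => (path t).det) (Set.Icc 0 1) :=
    (Continuous.matrix_det (by fun_prop)).continuousOn
  by_contra! hle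
  obtain ⟨t, ht, hzero⟩ := intermediate_value_Icc' zero_le_one hcont
    (show (0 : ℝ) ∈ Set.Icc (path 1).det (path 0).det by simpa [path] using hle)
  exact hpath_det t ht hzero

theorem dotProduct_adjugate_mulVec_nonneg_of_pos {A : Matrix ι ι ℝ}
    (hA : ∀ x ≠ 0, 0 < x ⬝ᵥ (A *ᵥ x)) (x : ι → ℝ) : 0 ≤ x ⬝ᵥ (A.adjugate *ᵥ x) := by
  have hdet : 0 < A.det := det_pos_of_forall_dotProduct_mulVec_pos hA
  have hunit : IsUnit A.det := hdet.ne'.isUnit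
  have hadj : A.adjugate = A.det • A⁻¹ := by
    rw [inv_def, smul_smul, Ring.mul_inverse_cancel _ hunit, one_smul]
  set y := A⁻¹ *ᵥ x
  have hAy : A *ᵥ y = x := by rw [mulVec_mulVec, mul_nonsing_inv A hunit, one_mulVec]
  have hquad : x ⬝ᵥ (A.adjugate *ᵥ x) = A.det * (y ⬝ᵥ (A *ᵥ y)) := by
    rw [hadj, smul_mulVec, dotProduct_smul, smul_eq_mul, hAy, dotProduct_comm]
  rw [hquad]
  rcases eq_or_ne y 0 with hy | hy
  · simp [hy]
  · exact (mul_pos hdet (hA y hy)).le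

theorem dotProduct_adjugate_mulVec_nonneg {A : Matrix ι ι ℝ}
    (hA : ∀ x, 0 ≤ x ⬝ᵥ (A *ᵥ x)) (x : ι → ℝ) : 0 ≤ x ⬝ᵥ (A.adjugate *ᵥ x) := by
  let q : ℝ → ℝ := fun ε => x ⬝ᵥ ((A + ε • 1).adjugate *ᵥ x)
  have hcont : Continuous q :=
    continuous_const.dotProduct
      ((Continuous.matrix_adjugate (by fun_prop)).matrix_mulVec continuous_const)
  have hpos : ∀ ε > 0, 0 ≤ q ε := by
    intro ε hε
    refine dotProduct_adjugate_mulVec_nonneg_of_pos (fun y hy => ?_) x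
    have hyy : 0 < y ⬝ᵥ y := by simpa using dotProduct_self_star_pos_iff.2 hy
    have hexpand : y ⬝ᵥ ((A + ε • 1) *ᵥ y) = y ⬝ᵥ (A *ᵥ y) + ε * (y ⬝ᵥ y) := by
      simp [add_mulVec, smul_mulVec, dotProduct_add, dotProduct_smul]
    rw [hexpand]
    nlinarith [hA y]
  have hlim : Tendsto q (𝓝[>] 0) (𝓝 (q 0)) := hcont.continuousWithinAt
  have hq0 : 0 ≤ q 0 :=
    ge_of_tendsto hlim (eventually_nhdsWithin_of_forall fun ε hε => hpos ε hε)
  simpa [q] using hq0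

end Matrix

theorem stmt_18 (n : ℕ) (A : Matrix (Fin n) (Fin n) ℝ)
    (hA : ((1 / 2 : ℝ) • (A + Aᵀ)).PosSemidef) :
    ((1 / 2 : ℝ) • (A.adjugate + A.adjugateᵀ)).PosSemidef := by
  rw [posSemidef_half_add_transpose_iff] at hA ⊢
  exact dotProduct_adjugate_mulVec_nonneg hA
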